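/- arXiv:1512.04616 — 5 statements merged into one kernel-verified Lean document; each statement's English description precedes it below -/
import Mathlib

section
/- For every natural number n, the polynomial x^{2·3^n} + x^{3^n} + 1 is irreducible over the field F_2 with two elements. -/
open Polynomial IntermediateField

/-- Lifting the exponent: `4 ^ 3 ^ k = 1 + 3 ^ (k+1) * m` with `3 ∤ m`. -/
lemma lte_aux (k : ℕ) : ∃ m : ℤ, ¬ (3 ∣ m) ∧ (4:ℤ) ^ (3 ^ k) = 1 + 3 ^ (k+1) * m := by
  induction k with
  | zero => exact ⟨1, by norm_num, by norm_num⟩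
  | succ k ih =>
    obtain ⟨m, hm, h⟩ := ih
    set s : ℤ := 3 ^ k * m + 3 ^ k * 3 ^ k * m ^ 2 with hs
    refine ⟨m * (1 + 3 * s), ?_, ?_⟩
    · intro h3
      rcases (Int.Prime.dvd_mul' Nat.prime_three h3) with h1 | h1
      · exact hm h1
      · obtain ⟨c, hc⟩ := h1
        omega
    · have h31 : (3:ℕ) ^ (k+1) = 3 ^ k * 3 := by ring
      rw [h31, pow_mul, h, hs]
      ring

lemma nat_int_dvd (a b : ℕ) (h : 1 ≤ b) : (a ∣ b - 1) ↔ ((a:ℤ) ∣ (b:ℤ) - 1) := by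
  rw [← Int.natCast_dvd_natCast, Nat.cast_sub h, Nat.cast_one]

lemma two_pow_two_mul (e : ℕ) : (2:ℤ) ^ (2 * e) = 4 ^ e := by
  rw [pow_mul]; norm_num

lemma dvd_main (n : ℕ) : 3 ^ (n+1) ∣ 2 ^ (2 * 3 ^ n) - 1 := by
  obtain ⟨m, -, h⟩ := lte_aux n
  rw [nat_int_dvd _ _ Nat.one_le_two_pow]
  push_cast
  rw [two_pow_two_mul, h]
  exact ⟨m, by ring⟩

lemma not_dvd_aux (k : ℕ) : ¬ ((3:ℤ) ^ (k+2) ∣ 4 ^ (3 ^ k) - 1) := by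
  obtain ⟨m, hm, h⟩ := lte_aux k
  rw [h]
  intro hdvd
  apply hm
  have h32 : (3:ℤ) ^ (k+2) = 3 ^ (k+1) * 3 := by ring
  rw [h32, add_sub_cancel_left] at hdvd
  exact (mul_dvd_mul_iff_left (pow_ne_zero (k+1) (by norm_num : (3:ℤ) ≠ 0))).mp hdvd

lemma odd_case (e : ℕ) (he : Odd e) : ¬ (3 ∣ 2 ^ e - 1) := by
  rw [nat_int_dvd _ _ Nat.one_le_two_pow]
  intro hdvd
  push_cast at hdvd
  have h2 : (2:ℤ) ≡ -1 [ZMOD 3] := by decide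
  have h3 : ((2:ℤ)^e - 1) % 3 = ((-1:ℤ)^e - 1) % 3 := (h2.pow e).sub_right 1
  rw [he.neg_one_pow] at h3
  generalize hgen : (2:ℤ)^e = a at hdvd h3
  omega

lemma order_eq (n d : ℕ) (hd0 : 0 < d) (hdvd : 3 ^ (n+1) ∣ 2 ^ d - 1)
    (hle : d ≤ 2 * 3 ^ n) : d = 2 * 3 ^ n := by
  haveI : NeZero (3 ^ (n+1)) := ⟨by positivity⟩
  have hc : Nat.Coprime 2 (3 ^ (n+1)) := Nat.Coprime.pow_right _ (by norm_num)
  set u := ZMod.unitOfCoprime 2 hc with hu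
  have key : ∀ k : ℕ, u ^ k = 1 ↔ 3 ^ (n+1) ∣ 2 ^ k - 1 := by
    intro k
    have h2 : (2:ℕ) ^ k = (2 ^ k - 1) + 1 := by
      have := Nat.one_le_two_pow (n := k); omega
    rw [Units.ext_iff, Units.val_pow_eq_pow_val, Units.val_one, hu, ZMod.coe_unitOfCoprime,
      show ((2:ℕ) : ZMod (3 ^ (n+1))) ^ k = (((2:ℕ)^k : ℕ) : ZMod (3 ^ (n+1))) by push_cast; ring,
      h2]
    push_cast
    constructor
    · intro h
      rw [← ZMod.natCast_eq_zero_iff]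
      linear_combination h
    · intro h
      rw [(ZMod.natCast_eq_zero_iff _ _).mpr h, zero_add]
  set t := orderOf u with ht
  have ht_d : t ∣ d := orderOf_dvd_of_pow_eq_one ((key d).2 hdvd)
  have ht_N : t ∣ 2 * 3 ^ n := orderOf_dvd_of_pow_eq_one ((key _).2 (dvd_main n))
  have hteq : t = 2 * 3 ^ n := by
    by_contra hne
    obtain ⟨c, hc2⟩ := ht_N
    have hc1 : c ≠ 1 := by
      intro h; rw [h, mul_one] at hc2; exact hne hc2.symm
    obtain ⟨p, hp, hpc⟩ := Nat.exists_prime_and_dvd hc1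
    have hp23 : p = 2 ∨ p = 3 := by
      have hpd : p ∣ 2 * 3 ^ n := hc2 ▸ Dvd.dvd.mul_left hpc t
      rcases (Nat.Prime.dvd_mul hp).1 hpd with h | h
      · left; exact (Nat.prime_dvd_prime_iff_eq hp Nat.prime_two).mp h
      · right; exact (Nat.prime_dvd_prime_iff_eq hp Nat.prime_three).mp
          (hp.dvd_of_dvd_pow h)
    rcases hp23 with rfl | rfl
    · -- p = 2 : t ∣ 3 ^ n, contradiction mod 3
      obtain ⟨c', rfl⟩ := hpc
      have h3n : 3 ^ n = t * c' := by
        have h6 : 2 * 3 ^ n = 2 * (t * c') := by rw [hc2]; ring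
        omega
      have htdvd : t ∣ 3 ^ n := ⟨c', h3n⟩
      have hdd := (key (3 ^ n)).1 (orderOf_dvd_iff_pow_eq_one.mp htdvd)
      exact odd_case (3 ^ n) (Odd.pow ⟨1, by norm_num⟩)
        (dvd_trans ⟨3 ^ n, by ring⟩ hdd)
    · -- p = 3
      obtain ⟨c', rfl⟩ := hpc
      cases n with
      | zero =>
        simp only [pow_zero, mul_one] at hc2
        rcases Nat.eq_zero_or_pos c' with rfl | hpos
        · omega
        · have hd2 : 3 * c' ∣ 2 := ⟨t, by rw [hc2]; ring⟩
          have := Nat.le_of_dvd two_pos hd2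
          omega
      | succ m =>
        have h2m : 2 * 3 ^ m = t * c' := by
          have h6 : 3 * (2 * 3 ^ m) = 3 * (t * c') := by
            rw [show 3 * (t * c') = t * (3 * c') by ring, ← hc2]; ring
          omega
        have htdvd : t ∣ 2 * 3 ^ m := ⟨c', h2m⟩
        have hk := (key (2 * 3 ^ m)).1 (orderOf_dvd_iff_pow_eq_one.mp htdvd)
        apply not_dvd_aux m
        rw [← two_pow_two_mul]
        rw [nat_int_dvd _ _ Nat.one_le_two_pow] at hk
        push_cast at hk ⊢
        convert hk using 2
  rw [hteq] at ht_d
  exact le_antisymm hle (Nat.le_of_dvd hd0 ht_d)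

theorem stmt_0 (n : ℕ) :
    Irreducible ((X : Polynomial (ZMod 2)) ^ (2 * 3 ^ n) + X ^ (3 ^ n) + 1) := by
  haveI : Fact (Nat.Prime 2) := ⟨Nat.prime_two⟩
  set K := GaloisField 2 (2 * 3 ^ n) with hK
  have hN0 : 2 * 3 ^ n ≠ 0 := by positivity
  have hcardK : Nat.card K = 2 ^ (2 * 3 ^ n) := GaloisField.card 2 _ hN0
  have hcardU : Nat.card Kˣ = 2 ^ (2 * 3 ^ n) - 1 := by rw [Nat.card_units, hcardK]
  obtain ⟨g, hg⟩ := IsCyclic.exists_ofOrder_eq_natCard (α := Kˣ)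
  have hdvdN : 3 ^ (n+1) ∣ 2 ^ (2 * 3 ^ n) - 1 := dvd_main n
  have hNne : 2 ^ (2 * 3 ^ n) - 1 ≠ 0 := by
    have : (2:ℕ) ^ 1 ≤ 2 ^ (2 * 3 ^ n) := Nat.pow_le_pow_right (by norm_num)
      (Nat.one_le_iff_ne_zero.mpr hN0)
    omega
  set μ : K := ((g ^ ((2 ^ (2 * 3 ^ n) - 1) / 3 ^ (n+1)) : Kˣ) : K) with hμ
  have hμord : orderOf μ = 3 ^ (n+1) := by
    rw [hμ, orderOf_units, orderOf_pow, hg, hcardU,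
      Nat.gcd_eq_right (Nat.div_dvd_of_dvd hdvdN)]
    exact Nat.div_div_self hdvdN hNne
  have hμpow : μ ^ (3:ℕ) ^ (n+1) = 1 := by rw [← hμord]; exact pow_orderOf_eq_one μ
  have hμne : μ ^ 3 ^ n ≠ 1 := by
    intro h
    have h1 := Nat.le_of_dvd (by positivity) (hμord ▸ orderOf_dvd_of_pow_eq_one h)
    have h2 : (3:ℕ) ^ n < 3 ^ (n+1) := Nat.pow_lt_pow_right (by norm_num) (lt_add_one n)
    omega
  have hroot : μ ^ (2 * 3 ^ n) + μ ^ 3 ^ n + 1 = 0 := by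
    have hβ3 : (μ ^ 3 ^ n) ^ 3 = 1 := by rw [← pow_mul, ← pow_succ]; exact hμpow
    have h1 : (μ ^ 3 ^ n - 1) * ((μ ^ 3 ^ n) ^ 2 + μ ^ 3 ^ n + 1) = 0 := by
      linear_combination hβ3
    have h2 : (μ ^ 3 ^ n) ^ 2 + μ ^ 3 ^ n + 1 = 0 := by
      rcases mul_eq_zero.mp h1 with h | h
      · exact absurd (sub_eq_zero.mp h) hμne
      · exact h
    have h3 : μ ^ (2 * 3 ^ n) = (μ ^ 3 ^ n) ^ 2 := pow_mul' μ 2 (3 ^ n)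
    rw [h3]; exact h2
  have hint : IsIntegral (ZMod 2) μ := IsIntegral.of_finite (ZMod 2) μ
  set P : (ZMod 2)[X] := X ^ (2 * 3 ^ n) + X ^ 3 ^ n + 1 with hP
  have hPmonic : P.Monic := by
    rw [hP, add_assoc]
    apply monic_X_pow_add
    have h0 : 0 < (3:ℕ) ^ n := by positivity
    refine lt_of_le_of_lt (degree_add_le _ _) ?_
    rw [degree_X_pow, degree_one]
    refine max_lt ?_ ?_
    · exact_mod_cast (by omega : (3:ℕ) ^ n < 2 * 3 ^ n)
    · exact_mod_cast Nat.pos_of_ne_zero hN0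
  have hPdeg : P.natDegree = 2 * 3 ^ n := by
    have hd : P.degree = (2 * 3 ^ n : ℕ) := by
      have h0 : 0 < (3:ℕ) ^ n := by positivity
      rw [hP, add_assoc, ← degree_X_pow (R := ZMod 2) (2 * 3 ^ n)]
      apply degree_add_eq_left_of_degree_lt
      rw [degree_X_pow]
      refine lt_of_le_of_lt (degree_add_le _ _) ?_
      rw [degree_X_pow, degree_one]
      refine max_lt ?_ ?_
      · exact_mod_cast (by omega : (3:ℕ) ^ n < 2 * 3 ^ n)
      · exact_mod_cast Nat.pos_of_ne_zero hN0
    exact natDegree_eq_of_degree_eq_some hd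
  have hPne : P ≠ 0 := hPmonic.ne_zero
  have haeval : Polynomial.aeval μ P = 0 := by
    rw [hP]
    simp only [map_add, map_pow, aeval_X, map_one]
    exact hroot
  set q := minpoly (ZMod 2) μ with hq
  have hdvdq : q ∣ P := minpoly.dvd _ _ haeval
  have hqd : q.natDegree ≤ 2 * 3 ^ n := hPdeg ▸ natDegree_le_of_dvd hdvdq hPne
  have hqd0 : 0 < q.natDegree := minpoly.natDegree_pos hint
  -- the intermediate field generated by μ
  have hfr : Module.finrank (ZMod 2) ((ZMod 2)⟮μ⟯) = q.natDegree :=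
    IntermediateField.adjoin.finrank hint
  haveI : Fintype ((ZMod 2)⟮μ⟯) := Fintype.ofFinite _
  have hcardE : Nat.card ((ZMod 2)⟮μ⟯) = 2 ^ q.natDegree := by
    rw [Nat.card_eq_fintype_card, Module.card_eq_pow_finrank (K := ZMod 2), ZMod.card, hfr]
  set gen : (ZMod 2)⟮μ⟯ := IntermediateField.AdjoinSimple.gen (ZMod 2) μ with hgen
  have hgenmap : algebraMap ((ZMod 2)⟮μ⟯) K gen = μ :=
    IntermediateField.AdjoinSimple.algebraMap_gen (ZMod 2) μ
  have hgenord : orderOf gen = 3 ^ (n+1) := by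
    have h := orderOf_injective (algebraMap ((ZMod 2)⟮μ⟯) K).toMonoidHom
      (algebraMap ((ZMod 2)⟮μ⟯) K).injective gen
    simp only [RingHom.toMonoidHom_eq_coe, MonoidHom.coe_coe] at h
    rw [hgenmap, hμord] at h
    exact h.symm
  have hgen0 : gen ≠ 0 := by
    intro h
    have h0 : μ = 0 := by rw [← hgenmap, h, map_zero]
    rw [h0, zero_pow (by positivity : (3:ℕ) ^ (n+1) ≠ 0)] at hμpow
    exact zero_ne_one hμpow
  have hudvd : 3 ^ (n+1) ∣ 2 ^ q.natDegree - 1 := by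
    have h1 : orderOf (Units.mk0 gen hgen0) = 3 ^ (n+1) := by
      rw [← orderOf_units, Units.val_mk0, hgenord]
    have h2 := orderOf_dvd_natCard (Units.mk0 gen hgen0)
    rw [h1, Nat.card_units, hcardE] at h2
    exact h2
  have hdeq : q.natDegree = 2 * 3 ^ n := order_eq n _ hqd0 hudvd hqd
  have hPQ : q = P :=
    eq_of_dvd_of_natDegree_le_of_leadingCoeff hdvdq
      (by rw [hPdeg, hdeq]) (by rw [(minpoly.monic hint).leadingCoeff, hPmonic.leadingCoeff])
  rw [← hPQ]
  exact minpoly.irreducible hint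
end

section
/- Let k = F_2(x) and for each n let p_n = x^{2·3^n} + x^{3^n} + 1 ∈ k, and u_n = [[0, p_n],[1,0]] ∈ GL_2(k). Then for i ≠ j there exist no M ∈ GL_2(k) and λ ∈ kˣ with M·u_i·M⁻¹ = λ·u_j. In particular the images of the u_n in PGL_2(k) lie in infinitely many distinct conjugacy classes. -/
set_option synthInstance.maxHeartbeats 400000

noncomputable def ppoly (n : ℕ) : RatFunc (ZMod 2) :=
  RatFunc.X ^ (2 * 3 ^ n) + RatFunc.X ^ (3 ^ n) + 1

noncomputable def umat (n : ℕ) : Matrix (Fin 2) (Fin 2) (RatFunc (ZMod 2)) :=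
  !![0, ppoly n; 1, 0]

open Polynomial

noncomputable def Ppoly (n : ℕ) : (ZMod 2)[X] := X ^ (2 * 3 ^ n) + X ^ (3 ^ n) + 1

lemma ppoly_eq (n : ℕ) :
    ppoly n = algebraMap ((ZMod 2)[X]) (RatFunc (ZMod 2)) (Ppoly n) := by
  simp [ppoly, Ppoly, map_add, map_pow, RatFunc.algebraMap_X]

lemma Ppoly_coeff0 (n : ℕ) : (Ppoly n).coeff 0 = 1 := by
  simp [Ppoly, coeff_X_pow, Nat.pos_iff_ne_zero]
  intro h
  exact absurd h (by positivity)

lemma Ppoly_ne_zero (n : ℕ) : Ppoly n ≠ 0 := by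
  intro h
  have := Ppoly_coeff0 n
  rw [h] at this; simp at this

lemma Ppoly_ntd (n : ℕ) : (Ppoly n).natTrailingDegree = 0 :=
  natTrailingDegree_eq_zero_of_constantCoeff_ne_zero (by
    simp [constantCoeff_apply, Ppoly_coeff0 n])

lemma dsq (p : (ZMod 2)[X]) : derivative (p^2) = 0 := by
  rw [derivative_pow, show ((2:ℕ):ZMod 2) = 0 by decide, map_zero, zero_mul, zero_mul]

lemma dP (n : ℕ) : derivative (Ppoly n) = X ^ (3^n - 1) := by
  rw [Ppoly, derivative_add, derivative_add, derivative_one, derivative_X_pow,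
    derivative_X_pow]
  rw [show ((2 * 3^n : ℕ) : ZMod 2) = 0 by
        rw [Nat.cast_mul]; simp [show ((2:ZMod 2)) = 0 by decide],
      show ((3^n : ℕ) : ZMod 2) = 1 by
        rw [Nat.cast_pow, show ((3:ℕ):ZMod 2) = 1 by decide, one_pow]]
  simp

lemma det_umat (n : ℕ) : (umat n).det = -(ppoly n) := by
  rw [umat, Matrix.det_fin_two_of]; ring

theorem stmt_3 (i j : ℕ) (hij : i ≠ j) :
    ¬ ∃ M : GL (Fin 2) (RatFunc (ZMod 2)), ∃ lam : (RatFunc (ZMod 2))ˣ,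
      (M : Matrix (Fin 2) (Fin 2) (RatFunc (ZMod 2))) * umat i *
          ((M⁻¹ : GL (Fin 2) (RatFunc (ZMod 2))) : Matrix (Fin 2) (Fin 2) (RatFunc (ZMod 2)))
        = (lam : RatFunc (ZMod 2)) • umat j := by
  rintro ⟨M, lam, h⟩
  -- determinant equation
  have hMM : (M : Matrix (Fin 2) (Fin 2) (RatFunc (ZMod 2))) *
      ((M⁻¹ : GL (Fin 2) (RatFunc (ZMod 2))) : Matrix (Fin 2) (Fin 2) (RatFunc (ZMod 2))) = 1 := by
    rw [← Units.val_mul, mul_inv_cancel, Units.val_one]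
  have hdet := congrArg Matrix.det h
  rw [Matrix.det_mul, Matrix.det_mul, Matrix.det_smul, det_umat, det_umat] at hdet
  have h12 : (M : Matrix (Fin 2) (Fin 2) (RatFunc (ZMod 2))).det *
      ((M⁻¹ : GL (Fin 2) (RatFunc (ZMod 2))) : Matrix (Fin 2) (Fin 2) (RatFunc (ZMod 2))).det = 1 := by
    rw [← Matrix.det_mul, hMM, Matrix.det_one]
  simp only [Fintype.card_fin] at hdet
  have key : ppoly i = (lam : RatFunc (ZMod 2))^2 * ppoly j := by
    linear_combination -hdet - ppoly i * h12
  -- to polynomials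
  set L : RatFunc (ZMod 2) := (lam : RatFunc (ZMod 2)) with hL
  have hL0 : L ≠ 0 := Units.ne_zero lam
  have hden : algebraMap ((ZMod 2)[X]) (RatFunc (ZMod 2)) L.denom ≠ 0 :=
    RatFunc.algebraMap_ne_zero (RatFunc.denom_ne_zero L)
  have hnum0 : L.num ≠ 0 := RatFunc.num_ne_zero hL0
  rw [ppoly_eq, ppoly_eq, ← RatFunc.num_div_denom L, div_pow, div_mul_eq_mul_div,
    eq_div_iff (pow_ne_zero 2 hden)] at key
  have E1 : Ppoly i * L.denom^2 = L.num^2 * Ppoly j := by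
    apply RatFunc.algebraMap_injective (ZMod 2)
    push_cast [map_mul, map_pow]
    linear_combination key
  have E2 : X^(3^i - 1) * L.denom^2 = L.num^2 * X^(3^j - 1) := by
    have := congrArg derivative E1
    rw [derivative_mul, derivative_mul, dsq, dsq, dP, dP, mul_zero, add_zero,
      zero_mul, zero_add] at this
    exact this
  have E3 : Ppoly i * X^(3^j - 1) = Ppoly j * X^(3^i - 1) := by
    apply mul_left_cancel₀ (pow_ne_zero 2 hnum0)
    linear_combination X^(3^i - 1) * E1 - Ppoly i * E2
  have hT := congrArg natTrailingDegree E3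
  rw [natTrailingDegree_mul (Ppoly_ne_zero i) (pow_ne_zero _ X_ne_zero),
    natTrailingDegree_mul (Ppoly_ne_zero j) (pow_ne_zero _ X_ne_zero)] at hT
  rw [Ppoly_ntd, Ppoly_ntd, natTrailingDegree_X_pow, natTrailingDegree_X_pow] at hT
  have h3i : 1 ≤ 3^i := Nat.one_le_pow _ _ (by norm_num)
  have h3j : 1 ≤ 3^j := Nat.one_le_pow _ _ (by norm_num)
  have : (3:ℕ)^i = 3^j := by omega
  exact hij (Nat.pow_right_injective (by norm_num) this)
end

section
/- Let k be a field of characteristic 2 and a ∈ k not a square. If x, y, z, w ∈ k satisfy x⁴ + a·y⁴ + a²·z⁴ + a³·w⁴ = 0, then x = y = z = w = 0. -/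
lemma aux_sq (k : Type*) [Field k] [CharP k 2] (a : k) (ha : ¬ IsSquare a)
    (u v : k) (h : u ^ 2 + a * v ^ 2 = 0) : u = 0 ∧ v = 0 := by
  have h2 : (2 : k) = 0 := CharP.cast_eq_zero k 2
  have hv : v = 0 := by
    by_contra hv
    apply ha
    refine ⟨u / v, ?_⟩
    field_simp
    linear_combination -h + (a*v^2) * h2
  refine ⟨?_, hv⟩
  have : u ^ 2 = 0 := by rw [hv] at h; linear_combination h
  exact pow_eq_zero_iff (n := 2) (by norm_num) |>.mp this

theorem stmt_10 (k : Type*) [Field k] [CharP k 2] (a : k) (ha : ¬ IsSquare a)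
    (x y z w : k) (h : x ^ 4 + a * y ^ 4 + a ^ 2 * z ^ 4 + a ^ 3 * w ^ 4 = 0) :
    x = 0 ∧ y = 0 ∧ z = 0 ∧ w = 0 := by
  have h2 : (2 : k) = 0 := CharP.cast_eq_zero k 2
  have key : (x ^ 2 + a * z ^ 2) ^ 2 + a * (y ^ 2 + a * w ^ 2) ^ 2 = 0 := by
    linear_combination h + (x^2 * a * z^2 + a^2 * y^2 * w^2) * h2
  obtain ⟨h1, h2'⟩ := aux_sq k a ha _ _ key
  obtain ⟨hx, hz⟩ := aux_sq k a ha x z h1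
  obtain ⟨hy, hw⟩ := aux_sq k a ha y w h2'
  exact ⟨hx, hy, hz, hw⟩
end

section
/- Let K be a field of characteristic 2. Let N be the 4×4 nilpotent shift matrix, U = { I + y·N + z·N² + w·N³ : y,z,w ∈ K } the group of unipotent upper triangular Toeplitz matrices, and for b ∈ K let g_b = I + b·E₂₄ (where E₂₄ is the matrix unit with 1 in position (2,4)). Let H_b be the subgroup of GL_4(K) generated by U and g_b. Then for c ∈ K, the matrix I + c·E₂₄ belongs to H_b if and only if c = 0 or c = b. In particular, for distinct nonzero b, c ∈ K, the groups H_b and H_c are distinct. -/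
noncomputable section

def Nshift (K : Type*) [Field K] : Matrix (Fin 4) (Fin 4) K :=
  !![0, 1, 0, 0; 0, 0, 1, 0; 0, 0, 0, 1; 0, 0, 0, 0]

def E24 (K : Type*) [Field K] : Matrix (Fin 4) (Fin 4) K :=
  !![0, 0, 0, 0; 0, 0, 0, 1; 0, 0, 0, 0; 0, 0, 0, 0]

def Uset (K : Type*) [Field K] : Set (Matrix (Fin 4) (Fin 4) K) :=
  {M | ∃ y z w : K, M = (1 : Matrix (Fin 4) (Fin 4) K) + y • Nshift K +
    z • Nshift K ^ 2 + w • Nshift K ^ 3}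

def Hb (K : Type*) [Field K] (b : K) : Subgroup (GL (Fin 4) K) :=
  Subgroup.closure {g : GL (Fin 4) K |
    (g : Matrix (Fin 4) (Fin 4) K) ∈ Uset K ∨
    (g : Matrix (Fin 4) (Fin 4) K) = 1 + b • E24 K}

/-- normal form -/
def Mform {K : Type*} [Field K] (y z w t s : K) : Matrix (Fin 4) (Fin 4) K :=
  !![1, y, z, w + s; 0, 1, y, z + t; 0, 0, 1, y; 0, 0, 0, 1]

section aux
variable {K : Type*} [Field K]

lemma Mform_mul (y z w t s y' z' w' t' s' : K) :
    Mform y z w t s * Mform y' z' w' t' s' =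
      Mform (y + y') (z + z' + y * y') (w + w' + y * z' + z * y') (t + t')
        (s + s' + y * t') := by
  ext i j
  fin_cases i <;> fin_cases j <;>
    simp [Mform, Matrix.mul_apply, Fin.sum_univ_four, Matrix.vecHead, Matrix.vecTail] <;> ring

lemma Uset_eq (y z w : K) :
    (1 : Matrix (Fin 4) (Fin 4) K) + y • Nshift K + z • Nshift K ^ 2 + w • Nshift K ^ 3 =
      Mform y z w 0 0 := by
  ext i j
  fin_cases i <;> fin_cases j <;>
    simp [Mform, Nshift, pow_succ, Matrix.mul_apply, Fin.sum_univ_four,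
      Matrix.one_apply, Matrix.vecHead, Matrix.vecTail]

lemma gb_eq (c : K) : (1 : Matrix (Fin 4) (Fin 4) K) + c • E24 K = Mform 0 0 0 c 0 := by
  ext i j
  fin_cases i <;> fin_cases j <;>
    simp [Mform, E24, Matrix.one_apply, Matrix.vecHead, Matrix.vecTail]

end aux

lemma Mform_one {K : Type*} [Field K] : (Mform 0 0 0 0 0 : Matrix (Fin 4) (Fin 4) K) = 1 := by
  ext i j
  fin_cases i <;> fin_cases j <;>
    simp [Mform, Matrix.one_apply, Matrix.vecHead, Matrix.vecTail]

lemma key {K : Type*} [Field K] [CharP K 2] (b c : K) :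
    (∃ g ∈ Hb K b, (g : Matrix (Fin 4) (Fin 4) K) = 1 + c • E24 K) ↔ (c = 0 ∨ c = b) := by
  have h2 : ∀ x : K, x + x = 0 := fun x => by
    have h : (2 : K) = 0 := by exact_mod_cast CharP.cast_eq_zero K 2
    calc x + x = 2 * x := by ring
    _ = 0 := by rw [h]; ring
  constructor
  · rintro ⟨g, hg, hval⟩
    have inv : ∀ h ∈ Hb K b, ∃ y z w t s : K, (t = 0 ∨ t = b) ∧
        (h : Matrix (Fin 4) (Fin 4) K) = Mform y z w t s := by
      intro h hh
      refine Subgroup.closure_induction ?_ ?_ ?_ ?_ hh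
      · rintro x (⟨y, z, w, hx⟩ | hx)
        · exact ⟨y, z, w, 0, 0, Or.inl rfl, by rw [hx, Uset_eq]⟩
        · exact ⟨0, 0, 0, b, 0, Or.inr rfl, by rw [hx, gb_eq]⟩
      · exact ⟨0, 0, 0, 0, 0, Or.inl rfl, by rw [Mform_one]; rfl⟩
      · rintro x x' - - ⟨y, z, w, t, s, ht, hx⟩ ⟨y', z', w', t', s', ht', hx'⟩
        refine ⟨y + y', z + z' + y * y', w + w' + y * z' + z * y', t + t',
          s + s' + y * t', ?_, ?_⟩
        · rcases ht with h | h <;> rcases ht' with h' | h' <;>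
            simp [h, h', h2]
        · have hc : ((x * x' : GL (Fin 4) K) : Matrix (Fin 4) (Fin 4) K) =
            (x : Matrix (Fin 4) (Fin 4) K) * (x' : Matrix (Fin 4) (Fin 4) K) := rfl
          rw [hc, hx, hx', Mform_mul]
      · rintro x - ⟨y, z, w, t, s, ht, hx⟩
        refine ⟨y, z + y ^ 2, w + y ^ 3, t, s + y * t, ht, ?_⟩
        have hmul : (x : Matrix (Fin 4) (Fin 4) K) * Mform y (z + y ^ 2) (w + y ^ 3) t (s + y * t) = 1 := by
          rw [hx, Mform_mul]
          have e1 : y + y = 0 := h2 y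
          have e2 : z + (z + y ^ 2) + y * y = 0 := by
            linear_combination h2 z + h2 (y * y)
          have e3 : w + (w + y ^ 3) + y * (z + y ^ 2) + z * y = 0 := by
            linear_combination h2 w + h2 (y * y ^ 2) + h2 (y * z)
          have e4 : t + t = 0 := h2 t
          have e5 : s + (s + y * t) + y * t = 0 := by
            linear_combination h2 s + h2 (y * t)
          rw [e1, e2, e3, e4, e5, Mform_one]
        have hinv : ((x⁻¹ : GL (Fin 4) K) : Matrix (Fin 4) (Fin 4) K) *
            ((x : GL (Fin 4) K) : Matrix (Fin 4) (Fin 4) K) = 1 := by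
          exact x.inv_mul
        calc ((x⁻¹ : GL (Fin 4) K) : Matrix (Fin 4) (Fin 4) K)
            = ((x⁻¹ : GL (Fin 4) K) : Matrix (Fin 4) (Fin 4) K) *
              (((x : GL (Fin 4) K) : Matrix (Fin 4) (Fin 4) K) *
                Mform y (z + y ^ 2) (w + y ^ 3) t (s + y * t)) := by rw [hmul, mul_one]
          _ = Mform y (z + y ^ 2) (w + y ^ 3) t (s + y * t) := by
              rw [← mul_assoc, hinv, one_mul]
    obtain ⟨y, z, w, t, s, ht, hM⟩ := inv g hg
    rw [hval, gb_eq] at hM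
    have h02 : z = 0 := by
      have := congrFun (congrFun hM 0) 2
      simpa [Mform, Matrix.vecHead, Matrix.vecTail] using this.symm
    have h13 : c = z + t := by
      have := congrFun (congrFun hM 1) 3
      simpa [Mform, Matrix.vecHead, Matrix.vecTail] using this
    rw [h02, zero_add] at h13
    rw [h13]; exact ht
  · rintro (rfl | hcb)
    · refine ⟨1, one_mem _, ?_⟩
      simp
    · rw [hcb]
      have hself : ((1 : Matrix (Fin 4) (Fin 4) K) + b • E24 K) *
          ((1 : Matrix (Fin 4) (Fin 4) K) + b • E24 K) = 1 := by
        rw [gb_eq, Mform_mul]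
        simpa [h2 b] using Mform_one
      refine ⟨⟨1 + b • E24 K, 1 + b • E24 K, hself, hself⟩,
        Subgroup.subset_closure (Or.inr rfl), rfl⟩

theorem stmt_14 (K : Type*) [Field K] [CharP K 2] (b : K) :
    (∀ c : K,
      (∃ g ∈ Hb K b, (g : Matrix (Fin 4) (Fin 4) K) = 1 + c • E24 K) ↔ (c = 0 ∨ c = b)) ∧
    (∀ b' c' : K, b' ≠ 0 → c' ≠ 0 → b' ≠ c' → Hb K b' ≠ Hb K c') := by
  refine ⟨fun c => key b c, ?_⟩
  intro b' c' hb' hc' hne heq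
  have h1 : ∃ g ∈ Hb K b', (g : Matrix (Fin 4) (Fin 4) K) = 1 + b' • E24 K :=
    (key b' b').mpr (Or.inr rfl)
  rw [heq] at h1
  rcases (key c' b').mp h1 with h | h
  · exact hb' h
  · exact hne h

end
end

section
/- Let k be a field of characteristic 3 and fix α in an algebraic closure K of k with α³ = a ∈ k \ k³. In GL_4(K), let h₁ be the block matrix with upper-left 3×3 block the companion matrix [[0,0,a],[1,0,0],[0,1,0]] and (4,4)-entry α, and let h₂ = I + E₁₂·α + 2·α²·E₁₃. Then the centralizer of {h₁, h₂} in GL_4(K) equals the set of matrices of the form: diagonal block s·I₃ in the upper-left, (4,4)-entry t, fourth column (x, α⁻¹x, α⁻²x, t)ᵀ for scalars s, t, x ∈ K (with s, t ≠ 0), and zero elsewhere. -/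
set_option maxHeartbeats 1000000 in
theorem stmt_15 (K : Type*) [Field K] [CharP K 3] (k : Subfield K)
    (α : K) (ha : α ^ 3 ∈ k) (hcube : ¬ ∃ c ∈ k, c ^ 3 = α ^ 3)
    (h₁ h₂ : Matrix (Fin 4) (Fin 4) K)
    (hh₁ : h₁ = !![0, 0, α ^ 3, 0; 1, 0, 0, 0; 0, 1, 0, 0; 0, 0, 0, α])
    (hh₂ : h₂ = !![1, α, 2 * α ^ 2, 0; 0, 1, 0, 0; 0, 0, 1, 0; 0, 0, 0, 1])
    (M : Matrix (Fin 4) (Fin 4) K) (hM : IsUnit M) :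
    (M * h₁ = h₁ * M ∧ M * h₂ = h₂ * M) ↔
      ∃ s t x : K, s ≠ 0 ∧ t ≠ 0 ∧
        M = !![s, 0, 0, x;
               0, s, 0, α⁻¹ * x;
               0, 0, s, α⁻¹ ^ 2 * x;
               0, 0, 0, t] := by
  have hα : α ≠ 0 := by
    rintro rfl
    exact hcube ⟨0, k.zero_mem, by ring⟩
  have h3 : (3 : K) = 0 := by exact_mod_cast CharP.cast_eq_zero K 3
  subst hh₁ hh₂
  constructor
  · rintro ⟨H1, H2⟩
    rw [← Matrix.ext_iff] at H1 H2
    have e10 := H1 1 0; have e11 := H1 1 1; have e12 := H1 1 2; have e13 := H1 1 3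
    have e20 := H1 2 0; have e21 := H1 2 1; have e22 := H1 2 2; have e23 := H1 2 3
    have e30 := H1 3 0; have e31 := H1 3 1
    have f11 := H2 1 1; have f21 := H2 2 1; have f31 := H2 3 1
    simp [Matrix.mul_apply, Fin.sum_univ_four, Matrix.vecHead, Matrix.vecTail] at e10 e11 e12 e13 e20 e21 e22 e23 e30 e31 f11 f21 f31
    have hm10 : M 1 0 = 0 := f11.resolve_right hα
    have hm20 : M 2 0 = 0 := f21.resolve_right hα
    have hm30 : M 3 0 = 0 := f31.resolve_right hα
    have hform : M = !![M 0 0, 0, 0, M 0 3;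
                        0, M 0 0, 0, α⁻¹ * M 0 3;
                        0, 0, M 0 0, α⁻¹ ^ 2 * M 0 3;
                        0, 0, 0, M 3 3] := by
      ext i j
      fin_cases i <;> fin_cases j <;> (try simp [Matrix.vecHead, Matrix.vecTail])
      all_goals first
        | rfl
        | assumption
        | exact e10
        | linear_combination -e11 - e22 + α ^ 3 * hm20
        | linear_combination -e12 + α ^ 3 * hm10
        | linear_combination e20 + hm10
        | linear_combination -e22 + α ^ 3 * hm20
        | linear_combination e21 + e10
        | linear_combination e30 + α * hm30
        | linear_combination e31 + α * e30 + α ^ 2 * hm30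
        | (field_simp; first
            | linear_combination e13
            | linear_combination -e13
            | linear_combination α * e23 + e13
            | linear_combination -(α * e23) - e13
            | linear_combination α * e23 - e13
            | linear_combination e13 - α * e23)
    have hd : M.det ≠ 0 := ((Matrix.isUnit_iff_isUnit_det M).mp hM).ne_zero
    refine ⟨M 0 0, M 3 3, M 0 3, ?_, ?_, hform⟩
    · intro h
      apply hd
      rw [hform]
      simp [Matrix.det_succ_row_zero, Fin.sum_univ_succ, Matrix.vecHead, Matrix.vecTail, h]
    · intro h
      apply hd
      rw [hform]
      simp [Matrix.det_succ_row_zero, Fin.sum_univ_succ, Matrix.vecHead, Matrix.vecTail, h]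
  · rintro ⟨s, t, x, hs, ht, rfl⟩
    constructor <;> (ext i j; fin_cases i <;> fin_cases j <;>
      simp [Matrix.mul_apply, Fin.sum_univ_four, Matrix.vecHead, Matrix.vecTail])
    all_goals try field_simp
    all_goals (ring_nf; try simp [h3])
    all_goals linear_combination (-x) * h3
end
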